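/- Let k be a field, A a commutative Noetherian k-algebra, and I, L ideals of A with J = I + L. Suppose that I/I² is a free A/I-module of rank c, that (I+L)/(I²+L) is a free A/J-module of rank n', and that A/J is a finite-dimensional k-vector space. Then dim_k Q(L,I) = (c − n') · dim_k(A/J). -/

import Mathlib

open Submodule

variable (A : Type*) [CommRing A]

/-- The natural map `I/(I² + I·L) → (I+L)/(I² + L)` induced by the inclusion `I ⊆ I + L`. -/
noncomputable def qIota (L I : Ideal A) :
    (↥I ⧸ Submodule.comap I.subtype (I ^ 2 + I * L)) →ₗ[A]
      (↥(I + L) ⧸ Submodule.comap (I + L).subtype (I ^ 2 + L)) :=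
  Submodule.liftQ _
    ((Submodule.comap (I + L).subtype (I ^ 2 + L)).mkQ.comp
      (Submodule.inclusion (le_sup_left : I ≤ I + L)))
    (by
      intro x hx
      have hle : I ^ 2 + I * L ≤ I ^ 2 + L := by
        rw [Submodule.add_eq_sup, Submodule.add_eq_sup]
        exact sup_le_sup_left (Ideal.mul_le_inf.trans inf_le_right) _
      simp only [LinearMap.mem_ker, LinearMap.comp_apply, Submodule.mkQ_apply,
        Submodule.Quotient.mk_eq_zero, Submodule.mem_comap, Submodule.coe_subtype,
        Submodule.coe_inclusion]
      exact hle hx)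

/-- The restriction map `Hom_A((I+L)/(I²+L), A/(I+L)) → Hom_A(I/(I²+I·L), A/(I+L))`. -/
noncomputable def qRes (L I : Ideal A) :
    ((↥(I + L) ⧸ Submodule.comap (I + L).subtype (I ^ 2 + L)) →ₗ[A] A ⧸ (I + L)) →ₗ[A]
      ((↥I ⧸ Submodule.comap I.subtype (I ^ 2 + I * L)) →ₗ[A] A ⧸ (I + L)) :=
  LinearMap.lcomp A (A ⧸ (I + L)) (qIota A L I)

/-- The module `Q(L,I)`: the cokernel of the restriction map
`Hom_A((I+L)/(I²+L), A/(I+L)) → Hom_A(I/(I²+I·L), A/(I+L))`. -/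
noncomputable abbrev Qmod (L I : Ideal A) :=
  ((↥I ⧸ Submodule.comap I.subtype (I ^ 2 + I * L)) →ₗ[A] A ⧸ (I + L)) ⧸
    LinearMap.range (qRes A L I)

/- ### Auxiliary material -/

section Aux

variable {A}

/-- surjectivity of `qIota`. -/
theorem qIota_surjective (L I : Ideal A) : Function.Surjective (qIota A L I) := by
  intro z
  obtain ⟨x, rfl⟩ := Submodule.mkQ_surjective _ z
  have hx : (x : A) ∈ I ⊔ L := by rw [← Submodule.add_eq_sup]; exact x.2
  obtain ⟨i, hi, l, hl, hil⟩ := Submodule.mem_sup.1 hx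
  refine ⟨Submodule.Quotient.mk ⟨i, hi⟩, ?_⟩
  rw [qIota, Submodule.liftQ_apply]
  simp only [LinearMap.comp_apply, Submodule.mkQ_apply]
  rw [Submodule.Quotient.eq]
  refine Submodule.mem_comap.2 ?_
  simp only [Submodule.subtype_apply, AddSubgroupClass.coe_sub, Submodule.coe_inclusion]
  have h2 : i - (x : A) = -l := by rw [← hil]; ring
  rw [h2, Submodule.add_eq_sup]
  exact Submodule.mem_sup_right (neg_mem hl)

/-- injectivity of `qRes`. -/
theorem qRes_injective (L I : Ideal A) : Function.Injective (qRes A L I) := by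
  intro f g h
  apply LinearMap.ext
  intro z
  obtain ⟨y, rfl⟩ := qIota_surjective L I z
  have := DFunLike.congr_fun h y
  simpa [qRes, LinearMap.lcomp_apply] using this

/-- `J • ⊤ = J` as submodules of `A`. -/
theorem smul_top_ideal (J : Ideal A) : J • (⊤ : Submodule A A) = (J : Submodule A A) := by
  rw [Ideal.smul_eq_mul, Ideal.mul_top]

/-- The comap description of the conormal-type submodule of `↥I`. -/
theorem comap_subtype_eq_smul_top (I L : Ideal A) :
    Submodule.comap I.subtype (I ^ 2 + I * L) = (I + L) • (⊤ : Submodule A ↥I) := by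
  have h1 : Submodule.map I.subtype ((I + L) • ⊤) = I ^ 2 + I * L := by
    rw [Submodule.map_smul'', Submodule.map_top, Submodule.range_subtype,
      Ideal.smul_eq_mul]
    ring
  rw [← h1, Submodule.comap_map_eq, Submodule.ker_subtype, sup_bot_eq]

variable (k : Type*) [CommRing k] [Algebra k A]

/-- View an `A`-linear map as a `k`-linear map between restricted scalars. -/
def toRS {M N : Type*} [AddCommGroup M] [Module A M] [AddCommGroup N] [Module A N]
    (f : M →ₗ[A] N) : RestrictScalars k A M →ₗ[k] RestrictScalars k A N where
  toFun := f
  map_add' := f.map_add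
  map_smul' := fun c x => f.map_smul (algebraMap k A c) x

/-- View an `A`-linear equiv as a `k`-linear equiv between restricted scalars. -/
def equivRS {M N : Type*} [AddCommGroup M] [Module A M] [AddCommGroup N] [Module A N]
    (e : M ≃ₗ[A] N) : RestrictScalars k A M ≃ₗ[k] RestrictScalars k A N :=
  { toRS k e.toLinearMap with
    invFun := e.symm
    left_inv := e.left_inv
    right_inv := e.right_inv }

/-- If `N` already carries a compatible `k`-module structure, restricting scalars gives
an isomorphic `k`-module. -/
def rsSelf (N : Type*) [AddCommGroup N] [Module A N] [Module k N] [IsScalarTower k A N] :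
    RestrictScalars k A N ≃ₗ[k] N :=
  { RestrictScalars.addEquiv k A N with
    map_smul' := fun c x => by
      show RestrictScalars.addEquiv k A N (c • x) = c • RestrictScalars.addEquiv k A N x
      rw [RestrictScalars.addEquiv_map_smul]
      exact (algebra_compatible_smul A c _).symm }

end Aux

section Dual

variable {A}

/-- `End_A(A/J) ≃ A/J`. -/
noncomputable def endEquivSelf (J : Ideal A) : Module.End A (A ⧸ J) ≃ₗ[A] A ⧸ J where
  toFun φ := φ 1
  map_add' _ _ := rfl
  map_smul' _ _ := rfl
  invFun a := a • (LinearMap.id : (A ⧸ J) →ₗ[A] A ⧸ J)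
  right_inv a := by simp [smul_eq_mul]
  left_inv φ := by
    refine LinearMap.ext fun x => ?_
    obtain ⟨y, rfl⟩ := Ideal.Quotient.mk_surjective x
    have h1 : (Ideal.Quotient.mk J y : A ⧸ J) = y • (1 : A ⧸ J) := by
      rw [Algebra.smul_def, Ideal.Quotient.algebraMap_eq, mul_one]
    calc (φ 1 • LinearMap.id) (Ideal.Quotient.mk J y)
        = Ideal.Quotient.mk J y * φ 1 := by
          simp [smul_eq_mul, mul_comm]
      _ = y • φ 1 := by
          rw [Algebra.smul_def, Ideal.Quotient.algebraMap_eq]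
      _ = φ (Ideal.Quotient.mk J y) := by rw [h1, map_smul]

/-- Dual of a free module: if `M ≃ (A/J)^m` then `Hom_A(M, A/J) ≃ (A/J)^m`. -/
noncomputable def dualEquivOfEquivPi {J : Ideal A} {m : ℕ} {M : Type*} [AddCommGroup M]
    [Module A M] (e : M ≃ₗ[A] (Fin m → A ⧸ J)) :
    (M →ₗ[A] A ⧸ J) ≃ₗ[A] (Fin m → A ⧸ J) :=
  (LinearEquiv.arrowCongr e (LinearEquiv.refl A (A ⧸ J))).trans
    (((LinearMap.lsum A (fun _ : Fin m => A ⧸ J) A).symm :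
        ((Fin m → A ⧸ J) →ₗ[A] A ⧸ J) ≃ₗ[A] (Fin m → ((A ⧸ J) →ₗ[A] A ⧸ J))).trans
      (LinearEquiv.piCongrRight fun _ => endEquivSelf J))

end Dual

section Conormal

variable {A}

theorem smul_quotient_mk_zero (J : Ideal A) {j : A} (hj : j ∈ J) (z : A ⧸ J) : j • z = 0 := by
  obtain ⟨y, rfl⟩ := Submodule.mkQ_surjective (J : Submodule A A) z
  rw [Submodule.mkQ_apply, ← Submodule.Quotient.mk_smul, Submodule.Quotient.mk_eq_zero]
  simpa [smul_eq_mul] using J.mul_mem_right y hj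

/-- The quotient map `A/I → A/J` for `I ≤ J`, as an `A`-linear map. -/
noncomputable def facQ (I J : Ideal A) (h : I ≤ J) : (A ⧸ I) →ₗ[A] A ⧸ J :=
  Submodule.mapQ (I : Submodule A A) (J : Submodule A A) LinearMap.id
    (by rwa [Submodule.comap_id])

theorem facQ_surjective (I J : Ideal A) (h : I ≤ J) : Function.Surjective (facQ I J h) := by
  intro z
  obtain ⟨y, rfl⟩ := Submodule.mkQ_surjective (J : Submodule A A) z
  exact ⟨Submodule.Quotient.mk y, by rw [Submodule.mkQ_apply, facQ, Submodule.mapQ_apply]; rfl⟩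

theorem ker_facQ (I J : Ideal A) (h : I ≤ J) :
    LinearMap.ker (facQ I J h) = J • (⊤ : Submodule A (A ⧸ I)) := by
  have h2 : Submodule.map I.mkQ ((J : Ideal A) • (⊤ : Submodule A A))
      = J • (⊤ : Submodule A (A ⧸ I)) := by
    rw [Submodule.map_smul'', Submodule.map_top, Submodule.range_mkQ]
  rw [smul_top_ideal] at h2
  rw [← h2]
  apply le_antisymm
  · intro x hx
    obtain ⟨y, rfl⟩ := Submodule.mkQ_surjective (I : Submodule A A) x
    rw [LinearMap.mem_ker, Submodule.mkQ_apply, facQ, Submodule.mapQ_apply,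
      LinearMap.id_apply, Submodule.Quotient.mk_eq_zero] at hx
    exact ⟨y, hx, rfl⟩
  · rintro _ ⟨y, hy, rfl⟩
    rw [LinearMap.mem_ker, Submodule.mkQ_apply, facQ, Submodule.mapQ_apply,
      LinearMap.id_apply, Submodule.Quotient.mk_eq_zero]
    exact hy

/-- The componentwise quotient map `(A/I)^c → (A/J)^c`. -/
noncomputable def piFac (I J : Ideal A) (h : I ≤ J) (c : ℕ) :
    (Fin c → A ⧸ I) →ₗ[A] (Fin c → A ⧸ J) :=
  LinearMap.pi fun i => (facQ I J h).comp (LinearMap.proj i)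

theorem piFac_surjective (I J : Ideal A) (h : I ≤ J) (c : ℕ) :
    Function.Surjective (piFac I J h c) := by
  intro g
  choose f hf using fun i => facQ_surjective I J h (g i)
  exact ⟨f, funext hf⟩

theorem ker_piFac (I J : Ideal A) (h : I ≤ J) (c : ℕ) :
    LinearMap.ker (piFac I J h c) = J • (⊤ : Submodule A (Fin c → A ⧸ I)) := by
  apply le_antisymm
  · intro x hx
    have hx2 : ∀ i, x i ∈ J • (⊤ : Submodule A (A ⧸ I)) := by
      intro i
      rw [← ker_facQ I J h, LinearMap.mem_ker]
      exact congrFun (LinearMap.mem_ker.1 hx) i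
    rw [← Finset.univ_sum_single x]
    refine Submodule.sum_mem _ fun i _ => ?_
    have hmem := Submodule.mem_map_of_mem
      (f := LinearMap.single A (fun _ : Fin c => A ⧸ I) i) (hx2 i)
    rw [Submodule.map_smul''] at hmem
    have hle : J • Submodule.map (LinearMap.single A (fun _ : Fin c => A ⧸ I) i) ⊤
        ≤ J • (⊤ : Submodule A (Fin c → A ⧸ I)) := Submodule.smul_mono le_rfl le_top
    have : (LinearMap.single A (fun _ : Fin c => A ⧸ I) i) (x i) = Pi.single i (x i) := rfl
    rw [this] at hmem
    exact hle hmem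
  · rw [Submodule.smul_le]
    intro j hj x _
    rw [LinearMap.mem_ker, map_smul]
    funext i
    exact smul_quotient_mk_zero J hj _

/-- The conormal quotient `I/(I² + I·L)` is isomorphic to `(A/J)^c`. -/
noncomputable def conormalEquivPi (I L : Ideal A) {c : ℕ}
    (b : Module.Basis (Fin c) (A ⧸ I) I.Cotangent) :
    (↥I ⧸ Submodule.comap I.subtype (I ^ 2 + I * L)) ≃ₗ[A] (Fin c → A ⧸ (I + L)) := by
  classical
  set J : Ideal A := I + L with hJ
  have hIJ : I ≤ J := le_sup_left
  let e : I.Cotangent ≃ₗ[A] (Fin c → A ⧸ I) := b.equivFun.restrictScalars A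
  let Φ : ↥I →ₗ[A] (Fin c → A ⧸ J) :=
    (piFac I J hIJ c).comp ((e : I.Cotangent →ₗ[A] (Fin c → A ⧸ I)).comp I.toCotangent)
  have hsurj : Function.Surjective Φ :=
    (piFac_surjective I J hIJ c).comp (e.surjective.comp I.toCotangent_surjective)
  have hker : LinearMap.ker Φ = Submodule.comap I.subtype (I ^ 2 + I * L) := by
    rw [comap_subtype_eq_smul_top]
    have h1 : LinearMap.ker Φ
        = Submodule.comap I.toCotangent
            (Submodule.comap (e : I.Cotangent →ₗ[A] (Fin c → A ⧸ I))
              (LinearMap.ker (piFac I J hIJ c))) := by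
      rw [LinearMap.ker_comp, Submodule.comap_comp]
    rw [h1, ker_piFac]
    have h2 : Submodule.comap (e : I.Cotangent →ₗ[A] (Fin c → A ⧸ I))
        (J • (⊤ : Submodule A (Fin c → A ⧸ I))) = J • (⊤ : Submodule A I.Cotangent) := by
      rw [Submodule.comap_equiv_eq_map_symm, Submodule.map_smul'', Submodule.map_top,
        LinearEquiv.range]
    rw [h2]
    have h3 : (J • (⊤ : Submodule A I.Cotangent))
        = Submodule.map I.toCotangent (J • (⊤ : Submodule A ↥I)) := by
      rw [Submodule.map_smul'', Submodule.map_top, Ideal.toCotangent_range]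
    rw [h3, Submodule.comap_map_eq]
    have h4 : LinearMap.ker I.toCotangent = I • (⊤ : Submodule A ↥I) := Submodule.ker_mkQ _
    rw [h4, sup_eq_left]
    exact Submodule.smul_mono le_sup_left le_rfl
  exact (Submodule.quotEquivOfEq _ _ hker.symm).trans (Φ.quotKerEquivOfSurjective hsurj)

end Conormal


instance rsAux (k A M : Type*) [CommSemiring k] [Semiring A] [Algebra k A] [I : AddCommGroup M] [Module A M] :
    @Module k (RestrictScalars k A M) _ (@AddCommGroup.toAddCommMonoid _ (instAddCommGroupRestrictScalars k A M)) :=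
  RestrictScalars.module k A M

set_option maxHeartbeats 2000000 in
/-- Let `k` be a field, `A` a Noetherian commutative `k`-algebra, `I, L`
ideals of `A` with `J = I + L`. If `I/I²` is a free `A/I`-module of rank `c`, the conormal
module `(I+L)/(I²+L)` is a free `A/J`-module of rank `n'` (expressed by an `A`-linear
isomorphism with `(A/J)^{n'}`), and `A/J` is a finite-dimensional `k`-vector space, then
`dim_k Q(L,I) = (c − n') · dim_k(A/J)`. -/
theorem fibers_stmt9 {k : Type*} [Field k] {A : Type*} [CommRing A] [IsNoetherianRing A]
    [Algebra k A] (I L : Ideal A) (c n' : ℕ)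
    (hfree : Nonempty (Module.Basis (Fin c) (A ⧸ I) I.Cotangent))
    (hfree' :
      Nonempty
        ((↥(I + L) ⧸ Submodule.comap (I + L).subtype (I ^ 2 + L)) ≃ₗ[A]
          (Fin n' → A ⧸ (I + L))))
    (hfin : FiniteDimensional k (A ⧸ (I + L))) :
    Module.finrank k (RestrictScalars k A (Qmod A L I)) =
      (c - n') * Module.finrank k (A ⧸ (I + L)) := by
  classical
  obtain ⟨b⟩ := hfree
  obtain ⟨e2⟩ := hfree'
  let e1 : (↥I ⧸ Submodule.comap I.subtype (I ^ 2 + I * L)) ≃ₗ[A] (Fin c → A ⧸ (I + L)) :=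
    conormalEquivPi I L b
  let eH1 := dualEquivOfEquivPi e1
  let eH2 := dualEquivOfEquivPi e2
  let E1 := (equivRS k eH1).trans (rsSelf k (Fin c → A ⧸ (I + L)))
  let E2 := (equivRS k eH2).trans (rsSelf k (Fin n' → A ⧸ (I + L)))
  have hpic : Module.finrank k (Fin c → A ⧸ (I + L)) = c * Module.finrank k (A ⧸ (I + L)) := by
    rw [Module.finrank_pi_fintype, Finset.sum_const, Finset.card_univ, Fintype.card_fin,
      smul_eq_mul]
  have hpin : Module.finrank k (Fin n' → A ⧸ (I + L)) = n' * Module.finrank k (A ⧸ (I + L)) := by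
    rw [Module.finrank_pi_fintype, Finset.sum_const, Finset.card_univ, Fintype.card_fin,
      smul_eq_mul]
  haveI fd1 : FiniteDimensional k
      (RestrictScalars k A
        ((↥I ⧸ Submodule.comap I.subtype (I ^ 2 + I * L)) →ₗ[A] A ⧸ (I + L))) :=
    LinearEquiv.finiteDimensional E1.symm
  haveI fd2 : FiniteDimensional k
      (RestrictScalars k A
        ((↥(I + L) ⧸ Submodule.comap (I + L).subtype (I ^ 2 + L)) →ₗ[A] A ⧸ (I + L))) :=
    LinearEquiv.finiteDimensional E2.symm
  have hr1 : Module.finrank k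
      (RestrictScalars k A
        ((↥I ⧸ Submodule.comap I.subtype (I ^ 2 + I * L)) →ₗ[A] A ⧸ (I + L)))
      = c * Module.finrank k (A ⧸ (I + L)) := by rw [E1.finrank_eq, hpic]
  have hr2 : Module.finrank k
      (RestrictScalars k A
        ((↥(I + L) ⧸ Submodule.comap (I + L).subtype (I ^ 2 + L)) →ₗ[A] A ⧸ (I + L)))
      = n' * Module.finrank k (A ⧸ (I + L)) := by rw [E2.finrank_eq, hpin]
  let g' := toRS k (LinearMap.range (qRes A L I)).mkQ
  let f' := toRS k (qRes A L I)
  have hsurj : Function.Surjective g' := fun y => by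
    obtain ⟨x, hx⟩ := Submodule.mkQ_surjective (LinearMap.range (qRes A L I)) y
    exact ⟨x, hx⟩
  have hker : LinearMap.ker g' = LinearMap.range f' := by
    ext x
    simp only [LinearMap.mem_ker, LinearMap.mem_range]
    constructor
    · intro hx
      have hx2 : RestrictScalars.addEquiv k A _ x ∈ LinearMap.range (qRes A L I) := by
        rw [← Submodule.Quotient.mk_eq_zero]
        exact hx
      obtain ⟨y, hy⟩ := hx2
      exact ⟨y, hy⟩
    · rintro ⟨y, rfl⟩
      show Submodule.Quotient.mk (qRes A L I y) = (0 : Qmod A L I)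
      rw [Submodule.Quotient.mk_eq_zero]
      exact ⟨y, rfl⟩
  have hinj : Function.Injective f' := fun x y hxy => qRes_injective L I hxy
  have RN := LinearMap.finrank_range_add_finrank_ker g'
  erw [LinearMap.range_eq_top.2 hsurj, finrank_top, hker,
    LinearMap.finrank_range_of_inj hinj, hr1, hr2] at RN
  have RN2 : Module.finrank k (RestrictScalars k A (Qmod A L I)) +
      n' * Module.finrank k (A ⧸ (I + L)) = c * Module.finrank k (A ⧸ (I + L)) := RN
  rw [Nat.sub_mul]
  omega
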